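/- Fix N ≥ 2, m ≥ 1, dimensions n_1,…,n_N ≥ 1, matrices A_i ∈ ℝ^{m×n_i}, b ∈ ℝ^m, convex f_i : ℝ^{n_i} → ℝ, ρ > 0, 0 < γ < 2, Δ > 0, and symmetric P_i ∈ ℝ^{n_i×n_i} with P_i − ρ(N/(2−γ) − 1)‖A_i‖²·I positive semidefinite, where ‖A_i‖ is the spectral norm. Let (x*, λ*) satisfy Σ_i A_i x_i* = b and L(x, λ*) ≥ L(x*, λ*) for all x. Let sequences x_i^{[k]} ∈ ℝ^{n_i}, λ̂^{[k]}, d̂^{[k]} ∈ ℝ^m (k ≥ 1) satisfy for every k: (i) ‖d̂^{[k]} − (Σ_i A_i x_i^{[k]} − b)‖ ≤ 2√m·Δ; (ii) λ̂^{[k+1]} = λ̂^{[k]} + γρ·d̂^{[k+1]}; (iii) for each i there is a subgradient g_i of f_i at x_i^{[k+1]} with g_i + A_iᵀλ̂^{[k]} + ρ·A_iᵀ(A_i(x_i^{[k+1]} − x_i^{[k]}) + d̂^{[k]}) + P_i(x_i^{[k+1]} − x_i^{[k]}) = 0; and (iv) ‖λ̂^{[k]} − λ*‖ ≤ M_λ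 and ‖d̂^{[k]}‖ ≤ M_x for constants M_λ, M_x ≥ 0. Then for every K ≥ 1: L( (1/K)Σ_{k=1}^K x^{[k+1]}, λ* ) − L(x*, λ*) ≤ (1/K) Σ_{k=1}^K ( L(x^{[k+1]}, λ*) − L(x*, λ*) ) ≤ C/K + E_Δ, where C := ½ Σ_i ‖x_i^{[1]} − x_i*‖²_{ρA_iᵀA_i + P_i} + (1/(2γρ))·‖λ̂^{[1]} − λ*‖² and E_Δ := (8/γ + 4|γ−1|/γ + 2)·√m·Δ·M_λ + 4ρ√m·Δ·M_x. -/

import Mathlib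

open scoped RealInnerProductSpace

/-- Weighted squared seminorm `‖v‖²_M := vᵀ M v`. -/
noncomputable def wnormSq {k : ℕ} (M : Matrix (Fin k) (Fin k) ℝ)
    (v : EuclideanSpace ℝ (Fin k)) : ℝ :=
  dotProduct v (M.mulVec v)

/-- The spectral (ℓ²-operator) norm of a real matrix. -/
noncomputable def specNorm {m k : ℕ} (A : Matrix (Fin m) (Fin k) ℝ) : ℝ :=
  ‖LinearMap.toContinuousLinearMap (Matrix.toEuclideanLin A)‖

/-- The Lagrangian `L(x, λ) := ∑_i f_i(x_i) + ⟨λ, ∑_i A_i x_i − b⟩`. -/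
noncomputable def Lag {N m : ℕ} {n : Fin N → ℕ}
    (f : ∀ i, EuclideanSpace ℝ (Fin (n i)) → ℝ)
    (A : ∀ i, Matrix (Fin m) (Fin (n i)) ℝ) (b : EuclideanSpace ℝ (Fin m))
    (x : ∀ i, EuclideanSpace ℝ (Fin (n i))) (lam : EuclideanSpace ℝ (Fin m)) : ℝ :=
  (∑ i, f i (x i))
    + ⟪lam, (∑ i, (WithLp.toLp 2 ((A i).mulVec (x i)))) - b⟫

/-- The gradient of the smooth part of the local proximal subproblem,
`Aᵀλ̂ + ρ·Aᵀ(A(xp − x) + d̂) + P(xp − x)`. -/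
noncomputable def gradTerm {m k : ℕ} (A : Matrix (Fin m) (Fin k) ℝ)
    (P : Matrix (Fin k) (Fin k) ℝ) (ρ : ℝ)
    (lamHat dHat : EuclideanSpace ℝ (Fin m))
    (x xp : EuclideanSpace ℝ (Fin k)) : EuclideanSpace ℝ (Fin k) :=
  WithLp.toLp 2 (A.transpose.mulVec lamHat
    + ρ • A.transpose.mulVec
        ((WithLp.toLp 2 (A.mulVec (xp - x))) + dHat)
    + P.mulVec (xp - x))

/-!
The proof is a Lyapunov argument with
`V(x, λ̂) = ½ ∑ᵢ ‖xᵢ - xᵢ*‖²_{ρAᵢᵀAᵢ + Pᵢ} + ‖λ̂ - λ*‖² / (2γρ)`.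
Write `r(x) = ∑ᵢ Aᵢxᵢ - b`. The subgradient inequality of the local subproblems, with the
three-point identity for the metric `ρAᵢᵀAᵢ + Pᵢ`, bounds `L(x⁺, λ*) - L(x*, λ*)` by
`⟪λ* - λ̂ - ρd̂, r(x⁺)⟫`, plus the decrease of the primal part of `V`, minus
`½ ∑ᵢ ‖xᵢ⁺ - xᵢ‖²_{ρAᵢᵀAᵢ + Pᵢ}`. The relaxed dual update turns `⟪λ* - λ̂, d̂⁺⟫` into the decrease
of the dual part of `V`; the remaining cross term costs `ρ/(2(2-γ)) ‖r(x⁺) - r(x)‖²` by Young's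
inequality, and the step-size condition (11) makes the discarded proximal term pay for it. The
quantization errors `d̂ - r(x)` only enter linearly against bounded vectors, so one iteration
costs at most `(1 + 4/γ) δ M_λ + ρ δ M_x` with `δ = 2√m Δ`. Summing telescopes `V`, and Jensen's
inequality for the convex map `x ↦ L(x, λ*)` handles the ergodic average.
-/

open Matrix WithLp

namespace QuantizedADMM

section

variable {m k : ℕ}

lemma inner_toLp_mulVec (A : Matrix (Fin m) (Fin k) ℝ) (u : EuclideanSpace ℝ (Fin m))
    (w : EuclideanSpace ℝ (Fin k)) :
    ⟪u, toLp 2 (A *ᵥ w)⟫ = ⟪toLp 2 (Aᵀ *ᵥ u), w⟫ := by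
  simp only [EuclideanSpace.inner_eq_star_dotProduct, star_trivial, mulVec_transpose,
    dotProduct_mulVec, dotProduct_comm]

lemma wnormSq_eq_inner (M : Matrix (Fin k) (Fin k) ℝ) (v : EuclideanSpace ℝ (Fin k)) :
    wnormSq M v = ⟪v, toLp 2 (M *ᵥ v)⟫ :=
  dotProduct_comm _ _

lemma wnormSq_nonneg {M : Matrix (Fin k) (Fin k) ℝ} (hM : M.PosSemidef)
    (v : EuclideanSpace ℝ (Fin k)) : 0 ≤ wnormSq M v := by
  simpa [wnormSq] using hM.dotProduct_mulVec_nonneg v.ofLp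

lemma wnormSq_add (M P : Matrix (Fin k) (Fin k) ℝ) (v : EuclideanSpace ℝ (Fin k)) :
    wnormSq (M + P) v = wnormSq M v + wnormSq P v := by
  simp only [wnormSq, add_mulVec, dotProduct_add]

lemma wnormSq_sub (M P : Matrix (Fin k) (Fin k) ℝ) (v : EuclideanSpace ℝ (Fin k)) :
    wnormSq (M - P) v = wnormSq M v - wnormSq P v := by
  simp only [wnormSq, sub_mulVec, dotProduct_sub]

lemma wnormSq_smul (c : ℝ) (M : Matrix (Fin k) (Fin k) ℝ) (v : EuclideanSpace ℝ (Fin k)) :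
    wnormSq (c • M) v = c * wnormSq M v := by
  simp only [wnormSq, smul_mulVec, dotProduct_smul, smul_eq_mul]

lemma wnormSq_one (v : EuclideanSpace ℝ (Fin k)) : wnormSq 1 v = ‖v‖ ^ 2 := by
  rw [wnormSq_eq_inner, one_mulVec, real_inner_self_eq_norm_sq]

lemma wnormSq_transpose_mul (A : Matrix (Fin m) (Fin k) ℝ) (v : EuclideanSpace ℝ (Fin k)) :
    wnormSq (Aᵀ * A) v = ‖toLp 2 (A *ᵥ v)‖ ^ 2 := by
  rw [wnormSq_eq_inner, ← mulVec_mulVec, ← real_inner_self_eq_norm_sq, inner_toLp_mulVec,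
    transpose_transpose, real_inner_comm]

lemma two_mul_inner_mulVec {M : Matrix (Fin k) (Fin k) ℝ} (hM : M.IsSymm)
    (a c : EuclideanSpace ℝ (Fin k)) :
    2 * ⟪a, toLp 2 (M *ᵥ c)⟫ = wnormSq M (a + c) - wnormSq M a - wnormSq M c := by
  have hsymm : ⟪c, toLp 2 (M *ᵥ a)⟫ = ⟪a, toLp 2 (M *ᵥ c)⟫ := by
    rw [inner_toLp_mulVec, hM, real_inner_comm]
  simp only [wnormSq_eq_inner, ofLp_add, mulVec_add, toLp_add, inner_add_left,
    inner_add_right, hsymm]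
  ring

lemma norm_toLp_mulVec_le (A : Matrix (Fin m) (Fin k) ℝ) (v : EuclideanSpace ℝ (Fin k)) :
    ‖toLp 2 (A *ᵥ v)‖ ≤ specNorm A * ‖v‖ :=
  (LinearMap.toContinuousLinearMap (toEuclideanLin A)).le_opNorm v

def proxMetric (ρ : ℝ) (A : Matrix (Fin m) (Fin k) ℝ) (P : Matrix (Fin k) (Fin k) ℝ) :
    Matrix (Fin k) (Fin k) ℝ :=
  ρ • (Aᵀ * A) + P

lemma gradTerm_eq (A : Matrix (Fin m) (Fin k) ℝ) (P : Matrix (Fin k) (Fin k) ℝ) (ρ : ℝ)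
    (lam d : EuclideanSpace ℝ (Fin m)) (x xp : EuclideanSpace ℝ (Fin k)) :
    gradTerm A P ρ lam d x xp
      = toLp 2 (Aᵀ *ᵥ ofLp (lam + ρ • d)) + toLp 2 (proxMetric ρ A P *ᵥ ofLp (xp - x)) := by
  rw [gradTerm, proxMetric, ← toLp_add]
  congr 1
  simp only [ofLp_add, ofLp_smul, ofLp_sub, mulVec_add, mulVec_smul, add_mulVec, smul_add,
    smul_mulVec, ← mulVec_mulVec]
  abel

lemma wnormSq_sub_comm (M : Matrix (Fin k) (Fin k) ℝ) (u v : EuclideanSpace ℝ (Fin k)) :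
    wnormSq M (u - v) = wnormSq M (v - u) := by
  rw [← neg_sub v u]
  simp only [wnormSq, ofLp_neg, mulVec_neg, dotProduct_neg, neg_dotProduct, neg_neg]

lemma isSymm_proxMetric (ρ : ℝ) (A : Matrix (Fin m) (Fin k) ℝ) {P : Matrix (Fin k) (Fin k) ℝ}
    (hP : P.IsSymm) : (proxMetric ρ A P).IsSymm :=
  (IsSymm.smul (transpose_mul Aᵀ A) ρ).add hP

lemma mul_norm_sq_le_wnormSq_proxMetric {ρ ν : ℝ} (hρ : 0 ≤ ρ) (hν : 1 ≤ ν)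
    {A : Matrix (Fin m) (Fin k) ℝ} {P : Matrix (Fin k) (Fin k) ℝ}
    (hP : (P - (ρ * (ν - 1) * specNorm A ^ 2) • 1).PosSemidef) (v : EuclideanSpace ℝ (Fin k)) :
    ρ * ν * ‖toLp 2 (A *ᵥ v)‖ ^ 2 ≤ wnormSq (proxMetric ρ A P) v := by
  have hPv : ρ * (ν - 1) * specNorm A ^ 2 * ‖v‖ ^ 2 ≤ wnormSq P v := by
    have := wnormSq_nonneg hP v
    rwa [wnormSq_sub, wnormSq_smul, wnormSq_one, sub_nonneg] at this
  have hAv : ‖toLp 2 (A *ᵥ v)‖ ^ 2 ≤ specNorm A ^ 2 * ‖v‖ ^ 2 := by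
    rw [← mul_pow]
    exact pow_le_pow_left₀ (norm_nonneg _) (norm_toLp_mulVec_le A v) 2
  have := mul_le_mul_of_nonneg_left hAv (mul_nonneg hρ (sub_nonneg.2 hν))
  rw [proxMetric, wnormSq_add, wnormSq_smul, wnormSq_transpose_mul]
  linarith

lemma wnormSq_proxMetric_nonneg {ρ ν : ℝ} (hρ : 0 ≤ ρ) (hν : 1 ≤ ν)
    {A : Matrix (Fin m) (Fin k) ℝ} {P : Matrix (Fin k) (Fin k) ℝ}
    (hP : (P - (ρ * (ν - 1) * specNorm A ^ 2) • 1).PosSemidef) (v : EuclideanSpace ℝ (Fin k)) :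
    0 ≤ wnormSq (proxMetric ρ A P) v :=
  (mul_nonneg (mul_nonneg hρ (zero_le_one.trans hν)) (sq_nonneg _)).trans
    (mul_norm_sq_le_wnormSq_proxMetric hρ hν hP v)

lemma two_mul_sub_le_of_add_gradTerm_eq_zero {A : Matrix (Fin m) (Fin k) ℝ}
    {P : Matrix (Fin k) (Fin k) ℝ} (hP : P.IsSymm) {ρ : ℝ} {lam d : EuclideanSpace ℝ (Fin m)}
    {φ : EuclideanSpace ℝ (Fin k) → ℝ} {g x xp : EuclideanSpace ℝ (Fin k)}
    (hg : ∀ z, φ xp + ⟪g, z - xp⟫ ≤ φ z) (hstat : g + gradTerm A P ρ lam d x xp = 0)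
    (z : EuclideanSpace ℝ (Fin k)) :
    2 * (φ xp - φ z) ≤ 2 * ⟪lam + ρ • d, toLp 2 (A *ᵥ ofLp (z - xp))⟫
      + wnormSq (proxMetric ρ A P) (z - x) - wnormSq (proxMetric ρ A P) (z - xp)
      - wnormSq (proxMetric ρ A P) (xp - x) := by
  have hpol := two_mul_inner_mulVec (isSymm_proxMetric ρ A hP) (z - xp) (xp - x)
  rw [sub_add_sub_cancel] at hpol
  have hsub := hg z
  rw [eq_neg_of_add_eq_zero_left hstat, inner_neg_left, gradTerm_eq, inner_add_left,
    ← inner_toLp_mulVec, real_inner_comm (z - xp)] at hsub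
  linarith

end

section

variable {E : Type*} [NormedAddCommGroup E] [InnerProductSpace ℝ E]

lemma real_inner_le_young {a : ℝ} (ha : 0 < a) (u v : E) :
    ⟪u, v⟫ ≤ (a * ‖v‖ ^ 2 + ‖u‖ ^ 2 / a) / 2 := by
  have hsq : (a * ‖v‖ ^ 2 + ‖u‖ ^ 2 / a) / 2 - ‖u‖ * ‖v‖ = (‖u‖ - a * ‖v‖) ^ 2 / (2 * a) := by
    field_simp
    ring
  have : 0 ≤ (‖u‖ - a * ‖v‖) ^ 2 / (2 * a) := by positivity
  linarith [real_inner_le_norm u v]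

lemma inner_sub_eq_of_eq_add_smul {c : ℝ} (hc : c ≠ 0) {lam lam' d : E}
    (h : lam' = lam + c • d) (μ : E) :
    ⟪μ - lam, d⟫ = c / 2 * ‖d‖ ^ 2 + (‖lam - μ‖ ^ 2 - ‖lam' - μ‖ ^ 2) / (2 * c) := by
  have hexp : ‖lam' - μ‖ ^ 2 = ‖lam - μ‖ ^ 2 + 2 * c * ⟪lam - μ, d⟫ + c ^ 2 * ‖d‖ ^ 2 := by
    rw [h, show lam + c • d - μ = (lam - μ) + c • d by abel, norm_add_sq_real, norm_smul,
      real_inner_smul_right, Real.norm_eq_abs, mul_pow, sq_abs]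
    ring
  rw [hexp, ← neg_sub lam μ, inner_neg_left]
  field_simp
  ring

lemma inner_dual_step_le {ρ γ δ Mlam Mx : ℝ} (hρ : 0 < ρ) (hγ₀ : 0 < γ) (hγ₂ : γ < 2)
    {μ lam lam' d d' r r' : E} (hupd : lam' = lam + (γ * ρ) • d')
    (he : ‖d - r‖ ≤ δ) (he' : ‖d' - r'‖ ≤ δ)
    (hlam : ‖lam - μ‖ ≤ Mlam) (hlam' : ‖lam' - μ‖ ≤ Mlam) (hd : ‖d‖ ≤ Mx) :
    ⟪μ - lam - ρ • d, r'⟫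
      ≤ (‖lam - μ‖ ^ 2 - ‖lam' - μ‖ ^ 2) / (2 * γ * ρ) + ρ / (2 - γ) * ‖r' - r‖ ^ 2 / 2
        + ((1 + 4 / γ) * δ * Mlam + ρ * δ * Mx) := by
  have hdual := inner_sub_eq_of_eq_add_smul (mul_pos hγ₀ hρ).ne' hupd μ
  have hyoung := real_inner_le_young (sub_pos.2 hγ₂) (r' - r) d'
  have hcross : ⟪d, d'⟫ = ‖d'‖ ^ 2 - ⟪r' - r, d'⟫ - ⟪(d' - r') - (d - r), d'⟫ := by
    rw [← real_inner_self_eq_norm_sq, ← inner_sub_left, ← inner_sub_left]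
    congr 1
    abel
  -- The error increment is paired with `γρ d' = lam' - lam` rather than with `d'` itself.
  have hquant : ρ * ⟪(d' - r') - (d - r), d'⟫ ≤ 4 * δ * Mlam / γ := by
    have hde : ‖(d' - r') - (d - r)‖ ≤ 2 * δ := (norm_sub_le _ _).trans (by linarith)
    have hdl : ‖lam' - lam‖ ≤ 2 * Mlam := by
      rw [← sub_sub_sub_cancel_right lam' lam μ]
      exact (norm_sub_le _ _).trans (by linarith)
    rw [le_div_iff₀ hγ₀]
    calc ρ * ⟪(d' - r') - (d - r), d'⟫ * γ = ⟪(d' - r') - (d - r), lam' - lam⟫ := by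
          rw [hupd, add_sub_cancel_left, real_inner_smul_right]
          ring
      _ ≤ ‖(d' - r') - (d - r)‖ * ‖lam' - lam‖ := real_inner_le_norm _ _
      _ ≤ 2 * δ * (2 * Mlam) :=
          mul_le_mul hde hdl (norm_nonneg _) (by linarith [norm_nonneg (d - r)])
      _ = 4 * δ * Mlam := by ring
  have herr_lam : ⟪lam - μ, d' - r'⟫ ≤ Mlam * δ := (real_inner_le_norm _ _).trans
    (mul_le_mul hlam he' (norm_nonneg _) ((norm_nonneg _).trans hlam))
  have herr_d : ⟪d, d' - r'⟫ ≤ Mx * δ := (real_inner_le_norm _ _).trans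
    (mul_le_mul hd he' (norm_nonneg _) ((norm_nonneg _).trans hd))
  have hsplit : ⟪μ - lam - ρ • d, r'⟫
      = ⟪μ - lam, d'⟫ + ⟪lam - μ, d' - r'⟫ - ρ * ⟪d, d'⟫ + ρ * ⟪d, d' - r'⟫ := by
    simp only [inner_sub_left, inner_sub_right, real_inner_smul_left]
    ring
  -- The `‖d'‖²` terms cancel: `γρ/2 - ρ + ρ(2 - γ)/2 = 0`.
  rw [hsplit, hdual, hcross]
  linear_combination herr_lam + hquant + mul_le_mul_of_nonneg_left hyoung hρ.le
    + mul_le_mul_of_nonneg_left herr_d hρ.le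

end

lemma norm_sum_sq_le_card_mul_sum_sq {ι E : Type*} [SeminormedAddCommGroup E] (s : Finset ι)
    (u : ι → E) : ‖∑ i ∈ s, u i‖ ^ 2 ≤ s.card * ∑ i ∈ s, ‖u i‖ ^ 2 :=
  (pow_le_pow_left₀ (norm_nonneg _) (norm_sum_le s u) 2).trans sq_sum_le_card_mul_sum_sq

lemma inv_mul_sum_le_of_le_sub_add {a V : ℕ → ℝ} {E : ℝ} {K : ℕ} (hK : 1 ≤ K)
    (hstep : ∀ k ∈ Finset.Icc 1 K, a k ≤ V k - V (k + 1) + E) (hV : 0 ≤ V (K + 1)) :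
    (K : ℝ)⁻¹ * ∑ k ∈ Finset.Icc 1 K, a k ≤ V 1 / K + E := by
  have hsum : ∑ k ∈ Finset.Icc 1 K, a k ≤ V 1 - V (K + 1) + K * E := by
    calc ∑ k ∈ Finset.Icc 1 K, a k ≤ ∑ k ∈ Finset.Icc 1 K, (V k - V (k + 1) + E) :=
          Finset.sum_le_sum hstep
      _ = V 1 - V (K + 1) + K * E := by
          rw [Finset.sum_add_distrib, ← neg_sub (V (K + 1)), ← Finset.sum_Icc_sub hK,
            ← Finset.sum_neg_distrib]
          simp
  have hK0 : (0 : ℝ) < K := by exact_mod_cast hK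
  rw [inv_mul_le_iff₀ hK0, mul_add, mul_div_cancel₀ _ hK0.ne']
  linarith

lemma ConvexOn.map_inv_card_smul_sum_sub_le {ι E : Type*} [AddCommGroup E] [Module ℝ E]
    {φ : E → ℝ} (hφ : ConvexOn ℝ Set.univ φ) {s : Finset ι} (hs : s.Nonempty) (y : ι → E)
    (c : ℝ) :
    φ ((s.card : ℝ)⁻¹ • ∑ k ∈ s, y k) - c ≤ (s.card : ℝ)⁻¹ * ∑ k ∈ s, (φ (y k) - c) := by
  have hcard : (s.card : ℝ) ≠ 0 := by exact_mod_cast hs.card_ne_zero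
  have hJ := hφ.map_sum_le (t := s) (w := fun _ => (s.card : ℝ)⁻¹) (p := y)
    (fun _ _ => by positivity) (by simp [hcard]) (fun _ _ => Set.mem_univ _)
  rw [Finset.smul_sum]
  simp only [smul_eq_mul, ← Finset.mul_sum] at hJ
  rw [Finset.sum_sub_distrib, mul_sub, Finset.sum_const, nsmul_eq_mul, inv_mul_cancel_left₀ hcard]
  linarith

lemma convexOn_sum {𝕜 E β ι : Type*} [Semiring 𝕜] [PartialOrder 𝕜] [AddCommMonoid E]
    [AddCommMonoid β] [PartialOrder β] [IsOrderedAddMonoid β] [SMul 𝕜 E] [Module 𝕜 β]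
    [PosSMulMono 𝕜 β] {s : Set E} (hs : Convex 𝕜 s) (t : Finset ι) {g : ι → E → β}
    (hg : ∀ i ∈ t, ConvexOn 𝕜 s (g i)) : ConvexOn 𝕜 s fun x => ∑ i ∈ t, g i x := by
  classical
  induction t using Finset.induction_on with
  | empty => simpa using convexOn_const 0 hs
  | insert i t hi ih =>
    simp only [Finset.sum_insert hi]
    exact (hg i (Finset.mem_insert_self i t)).add
      (ih fun j hj => hg j (Finset.mem_insert_of_mem hj))

lemma one_le_natCast_div_two_sub {N : ℕ} {γ : ℝ} (hN : 2 ≤ N) (hγ₀ : 0 < γ) (hγ₂ : γ < 2) :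
    1 ≤ (N : ℝ) / (2 - γ) := by
  have : (2 : ℝ) ≤ N := by exact_mod_cast hN
  rw [le_div_iff₀ (sub_pos.2 hγ₂)]
  linarith

section Problem

variable {N m : ℕ} {n : Fin N → ℕ} (A : ∀ i, Matrix (Fin m) (Fin (n i)) ℝ)
  (b : EuclideanSpace ℝ (Fin m)) (f : ∀ i, EuclideanSpace ℝ (Fin (n i)) → ℝ)
  (ρ γ : ℝ) (P : ∀ i, Matrix (Fin (n i)) (Fin (n i)) ℝ) (xs : ∀ i, EuclideanSpace ℝ (Fin (n i)))
  (lamStar : EuclideanSpace ℝ (Fin m))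

def residual (x : ∀ i, EuclideanSpace ℝ (Fin (n i))) : EuclideanSpace ℝ (Fin m) :=
  (∑ i, toLp 2 (A i *ᵥ x i)) - b

lemma residual_sub_residual (x x' : ∀ i, EuclideanSpace ℝ (Fin (n i))) :
    residual A b x' - residual A b x = ∑ i, toLp 2 (A i *ᵥ ofLp (x' i - x i)) := by
  simp only [residual, ofLp_sub, mulVec_sub, toLp_sub, Finset.sum_sub_distrib]
  abel

lemma convexOn_lag (hf : ∀ i, ConvexOn ℝ Set.univ (f i)) (lam : EuclideanSpace ℝ (Fin m)) :
    ConvexOn ℝ Set.univ fun x => Lag f A b x lam := by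
  let ℓ : (∀ i, EuclideanSpace ℝ (Fin (n i))) →ₗ[ℝ] ℝ :=
    ∑ i, innerₛₗ ℝ lam ∘ₗ toEuclideanLin (A i) ∘ₗ LinearMap.proj i
  have hLag :
      (fun x => Lag f A b x lam) = (fun x => ∑ i, f i (x i)) + fun x => ℓ x + -⟪lam, b⟫ := by
    funext x
    simp only [Lag, ℓ, sub_eq_add_neg, inner_add_right, inner_sum, inner_neg_right,
      LinearMap.coe_sum, LinearMap.coe_comp, coe_innerₛₗ_apply, LinearMap.coe_proj,
      Finset.sum_apply, Function.comp_apply, Function.eval, Pi.add_apply]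
    rfl
  rw [hLag]
  exact (convexOn_sum convex_univ _ fun i _ => (hf i).comp_linearMap
      (LinearMap.proj (R := ℝ) (φ := fun i => EuclideanSpace ℝ (Fin (n i))) i)).add
    ((ℓ.convexOn convex_univ).add_const _)

noncomputable def lyapunov (x : ∀ i, EuclideanSpace ℝ (Fin (n i)))
    (lam : EuclideanSpace ℝ (Fin m)) : ℝ :=
  1 / 2 * ∑ i, wnormSq (proxMetric ρ (A i) (P i)) (x i - xs i)
    + 1 / (2 * γ * ρ) * ‖lam - lamStar‖ ^ 2

variable {A ρ γ P}

lemma lyapunov_nonneg (hN : 2 ≤ N) (hρ : 0 < ρ) (hγ₀ : 0 < γ) (hγ₂ : γ < 2)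
    (hPpsd : ∀ i, (P i - (ρ * ((N : ℝ) / (2 - γ) - 1) * specNorm (A i) ^ 2) • 1).PosSemidef)
    (x : ∀ i, EuclideanSpace ℝ (Fin (n i))) (lam : EuclideanSpace ℝ (Fin m)) :
    0 ≤ lyapunov A ρ γ P xs lamStar x lam :=
  add_nonneg
    (mul_nonneg (by norm_num) (Finset.sum_nonneg fun i _ => wnormSq_proxMetric_nonneg hρ.le
      (one_le_natCast_div_two_sub hN hγ₀ hγ₂) (hPpsd i) _))
    (mul_nonneg (one_div_nonneg.2 (mul_pos (mul_pos two_pos hγ₀) hρ).le) (sq_nonneg _))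

lemma mul_norm_residual_sub_sq_le (hN : 2 ≤ N) (hρ : 0 < ρ) (hγ₀ : 0 < γ) (hγ₂ : γ < 2)
    (hPpsd : ∀ i, (P i - (ρ * ((N : ℝ) / (2 - γ) - 1) * specNorm (A i) ^ 2) • 1).PosSemidef)
    (x x' : ∀ i, EuclideanSpace ℝ (Fin (n i))) :
    ρ / (2 - γ) * ‖residual A b x' - residual A b x‖ ^ 2
      ≤ ∑ i, wnormSq (proxMetric ρ (A i) (P i)) (x' i - x i) := by
  have hν := one_le_natCast_div_two_sub hN hγ₀ hγ₂
  have hcs := norm_sum_sq_le_card_mul_sum_sq Finset.univ fun i => toLp 2 (A i *ᵥ ofLp (x' i - x i))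
  rw [Finset.card_univ, Fintype.card_fin] at hcs
  rw [residual_sub_residual]
  calc ρ / (2 - γ) * ‖∑ i, toLp 2 (A i *ᵥ ofLp (x' i - x i))‖ ^ 2
      ≤ ρ / (2 - γ) * (N * ∑ i, ‖toLp 2 (A i *ᵥ ofLp (x' i - x i))‖ ^ 2) := by
        gcongr
    _ = ∑ i, ρ * (N / (2 - γ)) * ‖toLp 2 (A i *ᵥ ofLp (x' i - x i))‖ ^ 2 := by
        rw [Finset.mul_sum, Finset.mul_sum]
        congr 1 with i
        ring
    _ ≤ ∑ i, wnormSq (proxMetric ρ (A i) (P i)) (x' i - x i) :=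
        Finset.sum_le_sum fun i _ => mul_norm_sq_le_wnormSq_proxMetric hρ.le hν (hPpsd i) _

lemma two_mul_lag_sub_lag_le (hPsymm : ∀ i, (P i).IsSymm)
    (hfeas : (∑ i, toLp 2 (A i *ᵥ xs i)) = b)
    {x x' : ∀ i, EuclideanSpace ℝ (Fin (n i))} {lam d : EuclideanSpace ℝ (Fin m)}
    (hstat : ∀ i, ∃ g : EuclideanSpace ℝ (Fin (n i)),
      (∀ z, f i (x' i) + ⟪g, z - x' i⟫ ≤ f i z) ∧
      g + gradTerm (A i) (P i) ρ lam d (x i) (x' i) = 0) :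
    2 * (Lag f A b x' lamStar - Lag f A b xs lamStar)
      ≤ 2 * ⟪lamStar - lam - ρ • d, residual A b x'⟫
        + ∑ i, wnormSq (proxMetric ρ (A i) (P i)) (x i - xs i)
        - ∑ i, wnormSq (proxMetric ρ (A i) (P i)) (x' i - xs i)
        - ∑ i, wnormSq (proxMetric ρ (A i) (P i)) (x' i - x i) := by
  have hres : residual A b xs = 0 := sub_eq_zero.2 hfeas
  have hblock : ∀ i, 2 * (f i (x' i) - f i (xs i))
      ≤ 2 * ⟪lam + ρ • d, toLp 2 (A i *ᵥ ofLp (xs i - x' i))⟫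
        + wnormSq (proxMetric ρ (A i) (P i)) (x i - xs i)
        - wnormSq (proxMetric ρ (A i) (P i)) (x' i - xs i)
        - wnormSq (proxMetric ρ (A i) (P i)) (x' i - x i) := by
    intro i
    obtain ⟨g, hg, hgrad⟩ := hstat i
    rw [wnormSq_sub_comm _ (x i), wnormSq_sub_comm _ (x' i)]
    exact two_mul_sub_le_of_add_gradTerm_eq_zero (hPsymm i) hg hgrad (xs i)
  have hdir : ∑ i, toLp 2 (A i *ᵥ ofLp (xs i - x' i)) = -residual A b x' := by
    rw [← residual_sub_residual, hres, zero_sub]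
  have hsum := Finset.sum_le_sum fun i (_ : i ∈ Finset.univ) => hblock i
  simp only [← Finset.mul_sum, Finset.sum_add_distrib, Finset.sum_sub_distrib, ← inner_sum,
    hdir, inner_neg_right] at hsum
  have hLag : Lag f A b x' lamStar - Lag f A b xs lamStar
      = ∑ i, f i (x' i) - ∑ i, f i (xs i) + ⟪lamStar, residual A b x'⟫ := by
    change _ + ⟪lamStar, residual A b x'⟫ - (_ + ⟪lamStar, residual A b xs⟫) = _
    rw [hres, inner_zero_right]
    ring
  rw [hLag, sub_sub lamStar, inner_sub_left]
  linarith

lemma lag_sub_lag_le_lyapunov_sub (hN : 2 ≤ N) (hρ : 0 < ρ) (hγ₀ : 0 < γ) (hγ₂ : γ < 2)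
    (hPsymm : ∀ i, (P i).IsSymm)
    (hPpsd : ∀ i, (P i - (ρ * ((N : ℝ) / (2 - γ) - 1) * specNorm (A i) ^ 2) • 1).PosSemidef)
    (hfeas : (∑ i, toLp 2 (A i *ᵥ xs i)) = b)
    {x x' : ∀ i, EuclideanSpace ℝ (Fin (n i))} {lam lam' d d' : EuclideanSpace ℝ (Fin m)}
    {δ Mlam Mx : ℝ}
    (hstat : ∀ i, ∃ g : EuclideanSpace ℝ (Fin (n i)),
      (∀ z, f i (x' i) + ⟪g, z - x' i⟫ ≤ f i z) ∧
      g + gradTerm (A i) (P i) ρ lam d (x i) (x' i) = 0)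
    (hupd : lam' = lam + (γ * ρ) • d')
    (he : ‖d - residual A b x‖ ≤ δ) (he' : ‖d' - residual A b x'‖ ≤ δ)
    (hlam : ‖lam - lamStar‖ ≤ Mlam) (hlam' : ‖lam' - lamStar‖ ≤ Mlam) (hd : ‖d‖ ≤ Mx) :
    Lag f A b x' lamStar - Lag f A b xs lamStar
      ≤ lyapunov A ρ γ P xs lamStar x lam - lyapunov A ρ γ P xs lamStar x' lam'
        + ((1 + 4 / γ) * δ * Mlam + ρ * δ * Mx) := by
  have hprimal := two_mul_lag_sub_lag_le b f xs lamStar hPsymm hfeas hstat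
  have hdual := inner_dual_step_le hρ hγ₀ hγ₂ hupd he he' hlam hlam' hd
  have hres := mul_norm_residual_sub_sq_le b hN hρ hγ₀ hγ₂ hPpsd x x'
  unfold lyapunov
  linear_combination hprimal / 2 + hdual + hres / 2

end Problem

end QuantizedADMM

open QuantizedADMM in
theorem qdpjadmm_sublinear_convergence_general
    (N m : ℕ) (hN : 2 ≤ N)
    (n : Fin N → ℕ)
    (A : ∀ i, Matrix (Fin m) (Fin (n i)) ℝ)
    (b : EuclideanSpace ℝ (Fin m))
    (f : ∀ i, EuclideanSpace ℝ (Fin (n i)) → ℝ)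
    (hf : ∀ i, ConvexOn ℝ Set.univ (f i))
    (ρ γ Δ : ℝ) (hρ : 0 < ρ) (hγ₀ : 0 < γ) (hγ₂ : γ < 2) (hΔ : 0 < Δ)
    (P : ∀ i, Matrix (Fin (n i)) (Fin (n i)) ℝ)
    (hPsymm : ∀ i, (P i).IsSymm)
    (hPpsd : ∀ i,
      (P i - (ρ * ((N : ℝ) / (2 - γ) - 1) * specNorm (A i) ^ 2) • 1).PosSemidef)
    (xs : ∀ i, EuclideanSpace ℝ (Fin (n i)))
    (lamStar : EuclideanSpace ℝ (Fin m))
    (hfeas : (∑ i, (WithLp.toLp 2 ((A i).mulVec (xs i)))) = b)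
    (x : ℕ → ∀ i, EuclideanSpace ℝ (Fin (n i)))
    (lamHat dHat : ℕ → EuclideanSpace ℝ (Fin m))
    (Mlam Mx : ℝ) (hMlam : 0 ≤ Mlam) (hMx : 0 ≤ Mx)
    (hd : ∀ k, 1 ≤ k →
      ‖dHat k - ((∑ i, (WithLp.toLp 2 ((A i).mulVec (x k i)))) - b)‖
        ≤ 2 * Real.sqrt m * Δ)
    (hdual : ∀ k, 1 ≤ k → lamHat (k + 1) = lamHat k + (γ * ρ) • dHat (k + 1))
    (hstat : ∀ k, 1 ≤ k → ∀ i, ∃ g : EuclideanSpace ℝ (Fin (n i)),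
      (∀ z, f i (x (k + 1) i) + ⟪g, z - x (k + 1) i⟫ ≤ f i z) ∧
      g + gradTerm (A i) (P i) ρ (lamHat k) (dHat k) (x k i) (x (k + 1) i) = 0)
    (hbdd : ∀ k, 1 ≤ k → ‖lamHat k - lamStar‖ ≤ Mlam ∧ ‖dHat k‖ ≤ Mx) :
    ∀ K : ℕ, 1 ≤ K →
      Lag f A b (fun i => (K : ℝ)⁻¹ • ∑ k ∈ Finset.Icc 1 K, x (k + 1) i) lamStar
          - Lag f A b xs lamStar
        ≤ (K : ℝ)⁻¹ * ∑ k ∈ Finset.Icc 1 K,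
            (Lag f A b (x (k + 1)) lamStar - Lag f A b xs lamStar) ∧
      (K : ℝ)⁻¹ * ∑ k ∈ Finset.Icc 1 K,
            (Lag f A b (x (k + 1)) lamStar - Lag f A b xs lamStar)
        ≤ ((1 / 2) * ∑ i, wnormSq (ρ • ((A i).transpose * A i) + P i) (x 1 i - xs i)
              + (1 / (2 * γ * ρ)) * ‖lamHat 1 - lamStar‖ ^ 2) / K
          + ((8 / γ + 4 * |γ - 1| / γ + 2) * Real.sqrt m * Δ * Mlam
              + 4 * ρ * Real.sqrt m * Δ * Mx) := by
  intro K hK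
  have hstep : ∀ k ∈ Finset.Icc 1 K, Lag f A b (x (k + 1)) lamStar - Lag f A b xs lamStar
      ≤ lyapunov A ρ γ P xs lamStar (x k) (lamHat k)
        - lyapunov A ρ γ P xs lamStar (x (k + 1)) (lamHat (k + 1))
        + ((1 + 4 / γ) * (2 * Real.sqrt m * Δ) * Mlam + ρ * (2 * Real.sqrt m * Δ) * Mx) := by
    intro k hk
    have hk : 1 ≤ k := (Finset.mem_Icc.1 hk).1
    exact lag_sub_lag_le_lyapunov_sub b f xs lamStar hN hρ hγ₀ hγ₂ hPsymm hPpsd hfeas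
      (hstat k hk) (hdual k hk) (hd k hk) (hd (k + 1) (by omega)) (hbdd k hk).1
      (hbdd (k + 1) (by omega)).1 (hbdd k hk).2
  refine ⟨?_, (inv_mul_sum_le_of_le_sub_add hK hstep
    (lyapunov_nonneg xs lamStar hN hρ hγ₀ hγ₂ hPpsd _ _)).trans (add_le_add le_rfl ?_)⟩
  · have havg : (fun i => (K : ℝ)⁻¹ • ∑ k ∈ Finset.Icc 1 K, x (k + 1) i)
        = ((Finset.Icc 1 K).card : ℝ)⁻¹ • ∑ k ∈ Finset.Icc 1 K, x (k + 1) := by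
      funext i
      simp [Finset.sum_apply]
    simpa [havg] using (convexOn_lag A b f hf lamStar).map_inv_card_smul_sum_sub_le
      (Finset.nonempty_Icc.2 hK) (fun k => x (k + 1)) (Lag f A b xs lamStar)
  · have hsmΔ : 0 ≤ Real.sqrt m * Δ := mul_nonneg (Real.sqrt_nonneg _) hΔ.le
    have hlam : 0 ≤ 4 * |γ - 1| / γ * (Real.sqrt m * Δ * Mlam) :=
      mul_nonneg (by positivity) (mul_nonneg hsmΔ hMlam)
    have hx : 0 ≤ ρ * (Real.sqrt m * Δ * Mx) := mul_nonneg hρ.le (mul_nonneg hsmΔ hMx)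
    linear_combination hlam + 2 * hx

/-- **Theorem 1 (eqs. (12)–(14)): sublinear ergodic convergence of the
quantized distributed proximal Jacobian ADMM.**  For every `K ≥ 1`,
`L((1/K)∑_{k=1}^K x^{[k+1]}, λ*) − L(x*, λ*)
  ≤ (1/K)∑_{k=1}^K (L(x^{[k+1]}, λ*) − L(x*, λ*)) ≤ C/K + E_Δ`. -/
theorem qdpjadmm_sublinear_convergence
    (N m : ℕ) (hN : 2 ≤ N) (hm : 1 ≤ m)
    (n : Fin N → ℕ) (hn : ∀ i, 1 ≤ n i)
    (A : ∀ i, Matrix (Fin m) (Fin (n i)) ℝ)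
    (b : EuclideanSpace ℝ (Fin m))
    (f : ∀ i, EuclideanSpace ℝ (Fin (n i)) → ℝ)
    (hf : ∀ i, ConvexOn ℝ Set.univ (f i))
    (ρ γ Δ : ℝ) (hρ : 0 < ρ) (hγ₀ : 0 < γ) (hγ₂ : γ < 2) (hΔ : 0 < Δ)
    (P : ∀ i, Matrix (Fin (n i)) (Fin (n i)) ℝ)
    (hPsymm : ∀ i, (P i).IsSymm)
    (hPpsd : ∀ i,
      (P i - (ρ * ((N : ℝ) / (2 - γ) - 1) * specNorm (A i) ^ 2) • 1).PosSemidef)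
    (xs : ∀ i, EuclideanSpace ℝ (Fin (n i)))
    (lamStar : EuclideanSpace ℝ (Fin m))
    (hfeas : (∑ i, (WithLp.toLp 2 ((A i).mulVec (xs i)))) = b)
    (hsaddle : ∀ x : ∀ i, EuclideanSpace ℝ (Fin (n i)),
      Lag f A b xs lamStar ≤ Lag f A b x lamStar)
    (x : ℕ → ∀ i, EuclideanSpace ℝ (Fin (n i)))
    (lamHat dHat : ℕ → EuclideanSpace ℝ (Fin m))
    (Mlam Mx : ℝ) (hMlam : 0 ≤ Mlam) (hMx : 0 ≤ Mx)
    (hd : ∀ k, 1 ≤ k →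
      ‖dHat k - ((∑ i, (WithLp.toLp 2 ((A i).mulVec (x k i)))) - b)‖
        ≤ 2 * Real.sqrt m * Δ)
    (hdual : ∀ k, 1 ≤ k → lamHat (k + 1) = lamHat k + (γ * ρ) • dHat (k + 1))
    (hstat : ∀ k, 1 ≤ k → ∀ i, ∃ g : EuclideanSpace ℝ (Fin (n i)),
      (∀ z, f i (x (k + 1) i) + ⟪g, z - x (k + 1) i⟫ ≤ f i z) ∧
      g + gradTerm (A i) (P i) ρ (lamHat k) (dHat k) (x k i) (x (k + 1) i) = 0)
    (hbdd : ∀ k, 1 ≤ k → ‖lamHat k - lamStar‖ ≤ Mlam ∧ ‖dHat k‖ ≤ Mx) :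
    ∀ K : ℕ, 1 ≤ K →
      Lag f A b (fun i => (K : ℝ)⁻¹ • ∑ k ∈ Finset.Icc 1 K, x (k + 1) i) lamStar
          - Lag f A b xs lamStar
        ≤ (K : ℝ)⁻¹ * ∑ k ∈ Finset.Icc 1 K,
            (Lag f A b (x (k + 1)) lamStar - Lag f A b xs lamStar) ∧
      (K : ℝ)⁻¹ * ∑ k ∈ Finset.Icc 1 K,
            (Lag f A b (x (k + 1)) lamStar - Lag f A b xs lamStar)
        ≤ ((1 / 2) * ∑ i, wnormSq (ρ • ((A i).transpose * A i) + P i) (x 1 i - xs i)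
              + (1 / (2 * γ * ρ)) * ‖lamHat 1 - lamStar‖ ^ 2) / K
          + ((8 / γ + 4 * |γ - 1| / γ + 2) * Real.sqrt m * Δ * Mlam
              + 4 * ρ * Real.sqrt m * Δ * Mx) :=
  qdpjadmm_sublinear_convergence_general N m hN n A b f hf ρ γ Δ hρ hγ₀ hγ₂ hΔ P hPsymm hPpsd xs
    lamStar hfeas x lamHat dHat Mlam Mx hMlam hMx hd hdual hstat hbdd
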